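/- arXiv:1901.05797 — 3 statements merged into one kernel-verified Lean document; each statement's English description precedes it below -/
import Mathlib

section
/- Let Z ∈ {0,1}^{n×m} and k ∈ ℕ. Then Z = X^T∘Y for some unimodal binary matrices X ∈ {0,1}^{k×n} and Y ∈ {0,1}^{k×m} if and only if there exist permutations σ of {1,…,n} and τ of {1,…,m} and intervals I_1,…,I_k ⊆ {1,…,n} and J_1,…,J_k ⊆ {1,…,m} such that the permuted matrix Z′ defined by z′_{ij} = z_{σ(i)τ(j)} satisfies: z′_{ij} = 1 exactly when (i,j) ∈ ⋃_{ℓ=1}^k I_ℓ × J_ℓ. That is, Z has such a factorization exactly when its rows and columns can be permuted so that its 1s form a union of k contiguous (axis-aligned) rectangular tiles. -/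
/-- The Boolean matrix product `X^T ∘ Y` of `X ∈ {0,1}^{k×n}` and `Y ∈ {0,1}^{k×m}`:
`(X^T ∘ Y)_{ij} = ⋁_ℓ x_{ℓi} ∧ y_{ℓj}`. -/
def boolProdT {k n m : ℕ} (X : Matrix (Fin k) (Fin n) Bool) (Y : Matrix (Fin k) (Fin m) Bool) :
    Matrix (Fin n) (Fin m) Bool :=
  Matrix.of fun i j => decide (∃ ℓ : Fin k, X ℓ i = true ∧ Y ℓ j = true)

/-- A binary matrix is unimodal (has the consecutive ones property) if its columns can be
permuted so that in every row the 1s occupy consecutive positions. -/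
def IsUnimodal {k n : ℕ} (X : Matrix (Fin k) (Fin n) Bool) : Prop :=
  ∃ σ : Equiv.Perm (Fin n), ∀ ℓ : Fin k, ∃ a b : ℕ,
    ∀ i : Fin n, X ℓ (σ i) = true ↔ (a ≤ (i : ℕ) ∧ (i : ℕ) ≤ b)

/-- A set of indices is an interval if it consists of consecutive positions
`{a, a+1, …, b}` (possibly empty). -/
def IsIntervalSet {n : ℕ} (I : Set (Fin n)) : Prop :=
  ∃ a b : ℕ, ∀ i : Fin n, i ∈ I ↔ (a ≤ (i : ℕ) ∧ (i : ℕ) ≤ b)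

/-!
Row `ℓ` of a unimodal `X`, read through its column permutation `σ`, is the indicator of an
interval `I ℓ`, and conversely any permutation and family of intervals define such a matrix.
Since `(X^T ∘ Y)_{σ i, τ j} = 1` iff some `ℓ` has `X_{ℓ, σ i} = Y_{ℓ, τ j} = 1`, i.e.
`i ∈ I ℓ` and `j ∈ J ℓ`, the 1s of the permuted product are exactly the union of the tiles
`I ℓ × J ℓ`.
-/

open Classical in
noncomputable def permSupportMatrix {ι α : Type*} (σ : Equiv.Perm α) (I : ι → Set α) : Matrix ι α Bool :=
  Matrix.of fun ℓ i => decide (σ.symm i ∈ I ℓ)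

theorem permSupportMatrix_apply_perm_eq_true_iff {ι α : Type*} (σ : Equiv.Perm α)
    (I : ι → Set α) (ℓ : ι) (i : α) :
    permSupportMatrix σ I ℓ (σ i) = true ↔ i ∈ I ℓ := by
  simp [permSupportMatrix]

theorem isUnimodal_permSupportMatrix {k n : ℕ} (σ : Equiv.Perm (Fin n))
    {I : Fin k → Set (Fin n)} (hI : ∀ ℓ, IsIntervalSet (I ℓ)) :
    IsUnimodal (permSupportMatrix σ I) := by
  refine ⟨σ, fun ℓ => ?_⟩
  obtain ⟨a, b, hab⟩ := hI ℓ
  exact ⟨a, b, fun i => (permSupportMatrix_apply_perm_eq_true_iff σ I ℓ i).trans (hab i)⟩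

theorem boolProdT_apply_eq_true_iff {k n m : ℕ} (X : Matrix (Fin k) (Fin n) Bool)
    (Y : Matrix (Fin k) (Fin m) Bool) (i : Fin n) (j : Fin m) :
    boolProdT X Y i j = true ↔ ∃ ℓ, X ℓ i = true ∧ Y ℓ j = true := by
  simp [boolProdT]

theorem boolProdT_apply_eq_true_iff_of_rows {k n m : ℕ} {α β : Type*}
    {X : Matrix (Fin k) (Fin n) Bool} {Y : Matrix (Fin k) (Fin m) Bool}
    {σ : α → Fin n} {τ : β → Fin m} {I : Fin k → Set α} {J : Fin k → Set β}
    (hX : ∀ ℓ i, X ℓ (σ i) = true ↔ i ∈ I ℓ) (hY : ∀ ℓ j, Y ℓ (τ j) = true ↔ j ∈ J ℓ)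
    (i : α) (j : β) :
    boolProdT X Y (σ i) (τ j) = true ↔ ∃ ℓ, i ∈ I ℓ ∧ j ∈ J ℓ := by
  simp only [boolProdT_apply_eq_true_iff, hX, hY]

/-- `Z = X^T ∘ Y` for some unimodal binary matrices `X ∈ {0,1}^{k×n}`,
`Y ∈ {0,1}^{k×m}` iff the rows and columns of `Z` can be permuted so that its 1s form a
union of `k` contiguous axis-aligned rectangular tiles `I_ℓ × J_ℓ`. -/
theorem obmf_factorization_iff_tiles {n m k : ℕ} (Z : Matrix (Fin n) (Fin m) Bool) :
    (∃ (X : Matrix (Fin k) (Fin n) Bool) (Y : Matrix (Fin k) (Fin m) Bool),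
        IsUnimodal X ∧ IsUnimodal Y ∧ Z = boolProdT X Y) ↔
      (∃ (σ : Equiv.Perm (Fin n)) (τ : Equiv.Perm (Fin m))
          (I : Fin k → Set (Fin n)) (J : Fin k → Set (Fin m)),
        (∀ ℓ, IsIntervalSet (I ℓ)) ∧ (∀ ℓ, IsIntervalSet (J ℓ)) ∧
        ∀ (i : Fin n) (j : Fin m),
          Z (σ i) (τ j) = true ↔ ∃ ℓ : Fin k, i ∈ I ℓ ∧ j ∈ J ℓ) := by
  constructor
  · rintro ⟨X, Y, ⟨σ, hX⟩, ⟨τ, hY⟩, rfl⟩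
    exact ⟨σ, τ, fun ℓ => {i | X ℓ (σ i) = true}, fun ℓ => {j | Y ℓ (τ j) = true}, hX, hY,
      boolProdT_apply_eq_true_iff_of_rows (fun _ _ => Iff.rfl) (fun _ _ => Iff.rfl)⟩
  · rintro ⟨σ, τ, I, J, hI, hJ, hZ⟩
    refine ⟨permSupportMatrix σ I, permSupportMatrix τ J, isUnimodal_permSupportMatrix σ hI,
      isUnimodal_permSupportMatrix τ hJ, ?_⟩
    ext i j
    obtain ⟨i, rfl⟩ := σ.surjective i
    obtain ⟨j, rfl⟩ := τ.surjective j
    rw [Bool.eq_iff_iff, hZ, boolProdT_apply_eq_true_iff_of_rows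
      (permSupportMatrix_apply_perm_eq_true_iff σ I) (permSupportMatrix_apply_perm_eq_true_iff τ J)]
end

section
/- Let G = (V, E) be a graph with n vertices and m edges, and let D_G be the binary matrix of size (n+m+1)×(3m+1) constructed from G as described. If G has a Hamiltonian path, then there exist unimodal binary matrices X of size k×(n+m+1) and Y of size k×(3m+1) with k = 3m − n + 2 such that D_G = X^T∘Y. Concretely, ordering the columns as z_0, x_1, y_1, z_1, x_2, y_2, z_2, …, and ordering the rows of R according to the Hamiltonian path followed by the rows of S, the 1s of the permuted matrix form a union of k contiguous rectangular tiles: m+1 tiles covering the individual rows of S, n−1 tiles covering the edges along the Hamiltonian path, and 2(m−n+1) tiles covering the remaining edges (2 tiles per edge). -/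
/-- Row index `r_v` (for a vertex `v = v_1, …, v_n`, 0-indexed) of the matrix `D_G`. -/
def rIdx {n m : ℕ} (v : Fin n) : Fin (n + m + 1) := ⟨v.1, by have := v.2; omega⟩

/-- Row index `s_t` (for `t = 0, …, m`) of the matrix `D_G`. -/
def sIdx {n m : ℕ} (t : Fin (m + 1)) : Fin (n + m + 1) := ⟨n + t.1, by have := t.2; omega⟩

/-- Column index `x_{k+1}` (for the edge `e_{k+1}`, 0-indexed `k`) of the matrix `D_G`. -/
def xIdx {m : ℕ} (k : Fin m) : Fin (3 * m + 1) := ⟨k.1, by have := k.2; omega⟩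

/-- Column index `y_{k+1}` (for the edge `e_{k+1}`, 0-indexed `k`) of the matrix `D_G`. -/
def yIdx {m : ℕ} (k : Fin m) : Fin (3 * m + 1) := ⟨m + k.1, by have := k.2; omega⟩

/-- Column index `z_t` (for `t = 0, …, m`) of the matrix `D_G`. -/
def zIdx {m : ℕ} (t : Fin (m + 1)) : Fin (3 * m + 1) := ⟨2 * m + t.1, by have := t.2; omega⟩

/-- The binary matrix `D_G` of size `(n+m+1) × (3m+1)` built from a graph on `n` vertices
whose `m` edges are enumerated by `e : Fin m → Sym2 (Fin n)`.  Its 1s are exactly: for each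
edge `e_ℓ = {v_i, v_j}` the cells `(r_i, x_ℓ)`, `(r_j, x_ℓ)`, `(r_i, y_ℓ)`, `(r_j, y_ℓ)`;
for each `ℓ = 1, …, m−1` the cells `(s_ℓ, y_ℓ)`, `(s_ℓ, z_ℓ)`, `(s_ℓ, x_{ℓ+1})`;
and the cells `(s_0, x_1)`, `(s_0, z_0)`, `(s_m, y_m)`, `(s_m, z_m)`. -/
def DG (n m : ℕ) (e : Fin m → Sym2 (Fin n)) : Matrix (Fin (n + m + 1)) (Fin (3 * m + 1)) Bool :=
  Matrix.of fun i j => decide (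
    (∃ (v : Fin n) (k : Fin m), i = rIdx v ∧ (j = xIdx k ∨ j = yIdx k) ∧ v ∈ e k) ∨
    (∃ t : Fin (m + 1), i = sIdx t ∧
      (j = zIdx t ∨
       (∃ k : Fin m, j = yIdx k ∧ (t : ℕ) = (k : ℕ) + 1) ∨
       (∃ k : Fin m, j = xIdx k ∧ (t : ℕ) = (k : ℕ)))))

/-- `G` (with vertices `Fin n` and edges enumerated by `e`) has a Hamiltonian path:
an ordering of all vertices in which consecutive vertices are joined by an edge. -/
def HasHamiltonianPath {n m : ℕ} (e : Fin m → Sym2 (Fin n)) : Prop :=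
  ∃ p : Fin n → Fin n, Function.Bijective p ∧
    ∀ i j : Fin n, (j : ℕ) = (i : ℕ) + 1 → s(p i, p j) ∈ Set.range e

/-!
Order the columns of `D_G` as `z₀, x₁, y₁, z₁, x₂, …` and the rows as `r` along the Hamiltonian
path followed by `s₀, …, s_m`. In these orders the ones of row `s_t` form one interval around
`z_t`; a path edge joining the `i`-th and `(i+1)`-st path vertices gives a `2 × 2` block on rows
`i, i+1` and on its two adjacent columns `x, y`; every other edge is covered by two `1 × 2` blocks,
one per endpoint. That makes at most `(m + 1) + (n - 1) + 2 (m - n + 1) = 3m - n + 2` rectangles,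
each an interval of rows times an interval of columns, and such a cover of the ones is the same
thing as a factorization `X^T ∘ Y` with unimodal `X` and `Y`: row `ℓ` of `X` (resp. `Y`) is the
row (resp. column) interval of the `ℓ`-th rectangle.
-/

open Function

namespace Sym2

variable {α : Type*}

noncomputable def endpoint (z : Sym2 α) (b : Bool) : α := cond b z.out.1 z.out.2

theorem endpoint_mem (z : Sym2 α) (b : Bool) : z.endpoint b ∈ z := by
  cases b
  · exact z.out_snd_mem
  · exact z.out_fst_mem

theorem mem_iff_exists_endpoint {z : Sym2 α} {a : α} :
    a ∈ z ↔ ∃ b, a = z.endpoint b := by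
  have hz : s(z.out.1, z.out.2) = z := z.out_eq
  conv_lhs => rw [← hz]
  simp [endpoint, or_comm]

end Sym2

section Tiling

variable {k N M : ℕ}

def intervalRows (π : Equiv.Perm (Fin N)) (I : Fin k → ℕ × ℕ) : Matrix (Fin k) (Fin N) Bool :=
  Matrix.of fun ℓ i => decide ((π i : ℕ) ∈ Set.Icc (I ℓ).1 (I ℓ).2)

theorem isUnimodal_intervalRows (π : Equiv.Perm (Fin N)) (I : Fin k → ℕ × ℕ) :
    IsUnimodal (intervalRows π I) :=
  ⟨π.symm, fun ℓ => ⟨(I ℓ).1, (I ℓ).2, fun i => by simp [intervalRows]⟩⟩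

def TilesCover {ι : Type*} (rows cols : ι → ℕ × ℕ) (a c : ℕ) : Prop :=
  ∃ l, a ∈ Set.Icc (rows l).1 (rows l).2 ∧ c ∈ Set.Icc (cols l).1 (cols l).2

theorem exists_isUnimodal_boolProdT_of_tilesCover {ι : Type*} [Fintype ι] [Nonempty ι]
    (hk : Fintype.card ι ≤ k) (D : Matrix (Fin N) (Fin M) Bool)
    (ρ : Equiv.Perm (Fin N)) (γ : Equiv.Perm (Fin M)) (rows cols : ι → ℕ × ℕ)
    (hD : ∀ i j, D i j = true ↔ TilesCover rows cols (ρ i) (γ j)) :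
    ∃ (X : Matrix (Fin k) (Fin N) Bool) (Y : Matrix (Fin k) (Fin M) Bool),
      IsUnimodal X ∧ IsUnimodal Y ∧ D = boolProdT X Y := by
  obtain ⟨g⟩ := Embedding.nonempty_of_card_le (hk.trans_eq (Fintype.card_fin k).symm)
  -- with fewer tiles than `k`, the surplus rows of `X` and `Y` repeat tiles
  have hg : Surjective (invFun g) := invFun_surjective g.injective
  refine ⟨intervalRows ρ (rows ∘ invFun g), intervalRows γ (cols ∘ invFun g),
    isUnimodal_intervalRows _ _, isUnimodal_intervalRows _ _, ?_⟩
  ext i j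
  rw [Bool.eq_iff_iff, hD]
  simp [TilesCover, boolProdT, intervalRows, hg.exists]

end Tiling

section DGMatrix

variable {n m : ℕ}

def rowPerm (q : Equiv.Perm (Fin n)) : Equiv.Perm (Fin (n + m + 1)) :=
  (finSumFinEquiv (m := n) (n := m + 1)).permCongr (Equiv.sumCongr q 1)

theorem rowPerm_rIdx (q : Equiv.Perm (Fin n)) (v : Fin n) :
    (rowPerm (m := m) q (rIdx v) : ℕ) = q v := by
  have : (rIdx v : Fin (n + m + 1)) = Fin.castAdd (m + 1) v := rfl
  simp [rowPerm, this, Equiv.permCongr_apply]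

theorem rowPerm_sIdx (q : Equiv.Perm (Fin n)) (t : Fin (m + 1)) :
    (rowPerm q (sIdx t) : ℕ) = n + t := by
  have : (sIdx t : Fin (n + m + 1)) = Fin.natAdd n t := rfl
  simp [rowPerm, this, Equiv.permCongr_apply]

def colPos (m : ℕ) (j : Fin (3 * m + 1)) : Fin (3 * m + 1) :=
  ⟨if j < m then 3 * j + 1 else if j < 2 * m then 3 * (j - m) + 2 else 3 * (j - 2 * m),
    by split_ifs <;> omega⟩

theorem colPos_injective : Injective (colPos m) := by
  intro a b h
  simp only [colPos, Fin.mk.injEq] at h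
  ext
  split_ifs at h <;> omega

noncomputable def colPerm (m : ℕ) : Equiv.Perm (Fin (3 * m + 1)) :=
  Equiv.ofBijective (colPos m) (Finite.injective_iff_bijective.mp colPos_injective)

theorem colPerm_xIdx (k : Fin m) : (colPerm m (xIdx k) : ℕ) = 3 * k + 1 := by
  simp [colPerm, colPos, xIdx]

theorem colPerm_yIdx (k : Fin m) : (colPerm m (yIdx k) : ℕ) = 3 * k + 2 := by
  simp [colPerm, colPos, yIdx]; omega

theorem colPerm_zIdx (t : Fin (m + 1)) : (colPerm m (zIdx t) : ℕ) = 3 * t := by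
  simp [colPerm, colPos, zIdx]; omega

theorem rIdx_injective : Injective (rIdx (n := n) (m := m)) := fun v w h => by
  simpa [rIdx, Fin.ext_iff] using h

theorem sIdx_injective : Injective (sIdx (n := n) (m := m)) := fun t u h => by
  simpa [sIdx, Fin.ext_iff] using h

theorem rIdx_ne_sIdx (v : Fin n) (t : Fin (m + 1)) : rIdx v ≠ sIdx t := by
  simp [rIdx, sIdx, Fin.ext_iff]; omega

theorem rIdx_or_sIdx (i : Fin (n + m + 1)) : (∃ v, i = rIdx v) ∨ ∃ t, i = sIdx t := by
  by_cases h : (i : ℕ) < n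
  · exact .inl ⟨⟨i, h⟩, rfl⟩
  · exact .inr ⟨⟨i - n, by omega⟩, Fin.ext (by simp [sIdx]; omega)⟩

theorem eq_xIdx_iff (j : Fin (3 * m + 1)) (k : Fin m) :
    j = xIdx k ↔ (colPerm m j : ℕ) = 3 * k + 1 := by
  rw [← colPerm_xIdx, ← Fin.ext_iff, (colPerm m).apply_eq_iff_eq]

theorem eq_yIdx_iff (j : Fin (3 * m + 1)) (k : Fin m) :
    j = yIdx k ↔ (colPerm m j : ℕ) = 3 * k + 2 := by
  rw [← colPerm_yIdx, ← Fin.ext_iff, (colPerm m).apply_eq_iff_eq]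

theorem eq_zIdx_iff (j : Fin (3 * m + 1)) (t : Fin (m + 1)) :
    j = zIdx t ↔ (colPerm m j : ℕ) = 3 * t := by
  rw [← colPerm_zIdx, ← Fin.ext_iff, (colPerm m).apply_eq_iff_eq]

theorem DG_rIdx_eq_true_iff (e : Fin m → Sym2 (Fin n)) (v : Fin n) (j : Fin (3 * m + 1)) :
    DG n m e (rIdx v) j = true ↔
      ∃ k : Fin m, (colPerm m j : ℕ) ∈ Set.Icc (3 * (k : ℕ) + 1) (3 * k + 2) ∧ v ∈ e k := by
  simp only [DG, Matrix.of_apply, decide_eq_true_eq, rIdx_injective.eq_iff, rIdx_ne_sIdx,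
    false_and, exists_false, or_false, exists_and_left, exists_eq_left', eq_xIdx_iff,
    eq_yIdx_iff, Set.mem_Icc]
  exact exists_congr fun k => and_congr_left fun _ => by omega

theorem DG_sIdx_eq_true_iff (e : Fin m → Sym2 (Fin n)) (t : Fin (m + 1)) (j : Fin (3 * m + 1)) :
    DG n m e (sIdx t) j = true ↔ (colPerm m j : ℕ) ∈ Set.Icc (3 * (t : ℕ) - 1) (3 * t + 1) := by
  simp only [DG, Matrix.of_apply, decide_eq_true_eq, sIdx_injective.eq_iff,
    (rIdx_ne_sIdx _ _).symm, false_and, exists_false, false_or, exists_eq_left', eq_xIdx_iff,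
    eq_yIdx_iff, eq_zIdx_iff, Set.mem_Icc]
  have hj := (colPerm m j).isLt
  have ht := t.isLt
  constructor
  · rintro (h | ⟨k, h, hk⟩ | ⟨k, h, hk⟩) <;> omega
  · intro h
    rcases (by omega : (colPerm m j : ℕ) = 3 * t ∨ (colPerm m j : ℕ) + 1 = 3 * t ∨
      (colPerm m j : ℕ) = 3 * t + 1) with h | h | h
    · exact .inl h
    · exact .inr (.inl ⟨⟨t - 1, by omega⟩, by simp only; omega, by simp only; omega⟩)
    · exact .inr (.inr ⟨⟨t, by omega⟩, h, rfl⟩)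

def IsPathEdges (e : Fin m → Sym2 (Fin n)) (q : Equiv.Perm (Fin n)) (f : Fin (n - 1) → Fin m) :
    Prop :=
  ∀ i v, v ∈ e (f i) ↔ (q v : ℕ) ∈ Set.Icc (i : ℕ) (i + 1)

theorem HasHamiltonianPath.exists_isPathEdges {e : Fin m → Sym2 (Fin n)}
    (h : HasHamiltonianPath e) : ∃ q f, IsPathEdges e q f := by
  obtain ⟨p, hp, hadj⟩ := h
  have hedge (i : Fin (n - 1)) : ∃ k, e k =
      s(p ⟨i, Nat.lt_of_lt_pred i.isLt⟩, p ⟨(i : ℕ) + 1, Nat.add_lt_of_lt_sub i.isLt⟩) :=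
    hadj _ _ rfl
  choose f hf using hedge
  refine ⟨(Equiv.ofBijective p hp).symm, f, fun i v => ?_⟩
  simp only [hf, Sym2.mem_iff, ← Equiv.ofBijective_apply p hp, ← Equiv.symm_apply_eq,
    Fin.ext_iff, Set.mem_Icc]
  omega

abbrev Tile (f : Fin (n - 1) → Fin m) : Type :=
  Fin (m + 1) ⊕ Fin (n - 1) ⊕ ({k // k ∉ Set.range f} × Bool)

noncomputable def tileRows (e : Fin m → Sym2 (Fin n)) (q : Equiv.Perm (Fin n))
    (f : Fin (n - 1) → Fin m) : Tile f → ℕ × ℕ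
  | .inl t => (n + t, n + t)
  | .inr (.inl i) => (i, i + 1)
  | .inr (.inr (k, b)) => (q ((e k).endpoint b), q ((e k).endpoint b))

-- At `t = 0` the truncated `3 * t - 1 = 0` is the right left end: row `s₀` starts at `z₀`.
def tileCols (f : Fin (n - 1) → Fin m) : Tile f → ℕ × ℕ
  | .inl t => (3 * t - 1, 3 * t + 1)
  | .inr (.inl i) => (3 * f i + 1, 3 * f i + 2)
  | .inr (.inr (k, _)) => (3 * k + 1, 3 * k + 2)

theorem tilesCover_sRow_iff (e : Fin m → Sym2 (Fin n)) (q : Equiv.Perm (Fin n))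
    (f : Fin (n - 1) → Fin m) (t : Fin (m + 1)) (c : ℕ) :
    TilesCover (tileRows e q f) (tileCols f) (n + t) c ↔
      c ∈ Set.Icc (3 * (t : ℕ) - 1) (3 * t + 1) := by
  simp only [TilesCover, Sum.exists, Prod.exists, tileRows, tileCols, Set.mem_Icc]
  constructor
  · rintro (⟨t', ht, hc⟩ | ⟨i, hi, -⟩ | ⟨k, b, hk, -⟩)
    · obtain rfl : t' = t := Fin.ext (by omega)
      exact hc
    · omega
    · omega
  · exact fun hc => .inl ⟨t, by omega, hc⟩

namespace IsPathEdges

variable {e : Fin m → Sym2 (Fin n)} {q : Equiv.Perm (Fin n)} {f : Fin (n - 1) → Fin m}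

theorem injective (hf : IsPathEdges e q f) : Injective f := by
  intro i j hij
  have hi := (hf j (q.symm ⟨i, by omega⟩)).1 (hij ▸ (hf i _).2 (by simp))
  have hj := (hf i (q.symm ⟨j, by omega⟩)).1 (hij ▸ (hf j _).2 (by simp))
  simp only [Equiv.apply_symm_apply, Set.mem_Icc] at hi hj
  omega

theorem card_tile_le (hf : IsPathEdges e q f) : Fintype.card (Tile f) ≤ 3 * m - n + 2 := by
  have hn : n - 1 ≤ m := by simpa using Fintype.card_le_of_injective f hf.injective
  have hk : Fintype.card {k // k ∉ Set.range f} = m - (n - 1) := by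
    rw [Fintype.card_subtype_compl, Set.card_range_of_injective hf.injective]
    simp
  simp only [Tile, Fintype.card_sum, Fintype.card_prod, Fintype.card_fin, Fintype.card_bool, hk]
  omega

theorem tilesCover_rRow_iff (hf : IsPathEdges e q f) (v : Fin n) (c : ℕ) :
    TilesCover (tileRows e q f) (tileCols f) (q v) c ↔
      ∃ k : Fin m, c ∈ Set.Icc (3 * (k : ℕ) + 1) (3 * k + 2) ∧ v ∈ e k := by
  simp only [TilesCover, Sum.exists, Prod.exists, Subtype.exists, tileRows, tileCols]
  constructor
  · rintro (⟨t, hv, -⟩ | ⟨i, hv, hc⟩ | ⟨k, -, b, hv, hc⟩)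
    · simp only [Set.mem_Icc] at hv
      omega
    · exact ⟨f i, hc, (hf i v).2 hv⟩
    · obtain rfl : v = (e k).endpoint b := q.injective (Fin.ext (by simpa using hv))
      exact ⟨k, hc, Sym2.endpoint_mem _ _⟩
  · rintro ⟨k, hc, hv⟩
    by_cases hk : k ∈ Set.range f
    · obtain ⟨i, rfl⟩ := hk
      exact .inr (.inl ⟨i, (hf i v).1 hv, hc⟩)
    · obtain ⟨b, rfl⟩ := Sym2.mem_iff_exists_endpoint.1 hv
      exact .inr (.inr ⟨k, hk, b, by simp, hc⟩)

theorem DG_eq_true_iff_tilesCover (hf : IsPathEdges e q f) (i : Fin (n + m + 1))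
    (j : Fin (3 * m + 1)) :
    DG n m e i j = true ↔
      TilesCover (tileRows e q f) (tileCols f) (rowPerm q i) (colPerm m j) := by
  rcases rIdx_or_sIdx i with ⟨v, rfl⟩ | ⟨t, rfl⟩
  · rw [DG_rIdx_eq_true_iff, rowPerm_rIdx, hf.tilesCover_rRow_iff]
  · rw [DG_sIdx_eq_true_iff, rowPerm_sIdx, tilesCover_sRow_iff]

end IsPathEdges

end DGMatrix

theorem dg_zero_error_of_hamiltonian_path_general (n m : ℕ) (e : Fin m → Sym2 (Fin n))
    (hham : HasHamiltonianPath e) :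
    ∃ (X : Matrix (Fin (3 * m - n + 2)) (Fin (n + m + 1)) Bool)
      (Y : Matrix (Fin (3 * m - n + 2)) (Fin (3 * m + 1)) Bool),
      IsUnimodal X ∧ IsUnimodal Y ∧ DG n m e = boolProdT X Y := by
  obtain ⟨q, f, hf⟩ := hham.exists_isPathEdges
  exact exists_isUnimodal_boolProdT_of_tilesCover hf.card_tile_le (DG n m e) (rowPerm q)
    (colPerm m) (tileRows e q f) (tileCols f) hf.DG_eq_true_iff_tilesCover

/-- If `G` (with `n` vertices and `m` edges, enumerated injectively by `e`,
no loops) has a Hamiltonian path, then there exist unimodal binary matrices `X` of size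
`k × (n+m+1)` and `Y` of size `k × (3m+1)` with `k = 3m − n + 2` such that
`D_G = X^T ∘ Y`. -/
theorem dg_zero_error_of_hamiltonian_path (n m : ℕ) (e : Fin m → Sym2 (Fin n))
    (hloop : ∀ k, ¬ (e k).IsDiag) (hinj : Function.Injective e)
    (hham : HasHamiltonianPath e) :
    ∃ (X : Matrix (Fin (3 * m - n + 2)) (Fin (n + m + 1)) Bool)
      (Y : Matrix (Fin (3 * m - n + 2)) (Fin (3 * m + 1)) Bool),
      IsUnimodal X ∧ IsUnimodal Y ∧ DG n m e = boolProdT X Y :=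
  dg_zero_error_of_hamiltonian_path_general n m e hham
end

section
/- Let T be a pq-tree over a finite set U with weights w : U → ℤ, and let v be a q-node of T with children c_1, …, c_ℓ (ℓ ≥ 2) in their given order. Then border(v) = max(x, y), where x = max_{1 ≤ i ≤ ℓ} ( border(c_i) + Σ_{j=1}^{i−1} total(c_j) ) and y = max_{1 ≤ i ≤ ℓ} ( border(c_i) + Σ_{j=i+1}^{ℓ} total(c_j) ). -/
/-- A pq-tree: leaves carry elements of `U`; the children of each internal node
(a p-node or a q-node) are given as a sequence. -/
inductive PQTree (U : Type) : Type where
  | leaf : U → PQTree U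
  | pnode : List (PQTree U) → PQTree U
  | qnode : List (PQTree U) → PQTree U

namespace PQTree

variable {U : Type}

/-- The list of leaves below a node, read left to right in the given order. -/
def leaves : PQTree U → List U
  | leaf u => [u]
  | pnode cs => cs.attach.flatMap (fun c => leaves c.1)
  | qnode cs => cs.attach.flatMap (fun c => leaves c.1)
  decreasing_by
  · have := List.sizeOf_lt_of_mem c.2; simp; omega
  · have := List.sizeOf_lt_of_mem c.2; simp; omega

/-- `total(v) = Σ_{u ∈ leaves(v)} w(u)`. -/
def total (w : U → ℤ) (t : PQTree U) : ℤ :=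
  ((leaves t).map w).sum

/-- `IsFrontier t l` holds when `l` is a frontier order of the pq-tree `t`: a linear order
of its leaves obtained by reading the leaves left to right after independently permuting
the children sequence of each p-node arbitrarily and either keeping or reversing the
children sequence of each q-node. -/
inductive IsFrontier : PQTree U → List U → Prop where
  | leaf (u : U) : IsFrontier (leaf u) [u]
  | pnode (cs cs' : List (PQTree U)) (fs : List (List U)) :
      cs'.Perm cs → List.Forall₂ IsFrontier cs' fs →
      IsFrontier (pnode cs) fs.flatten
  | qnodeKeep (cs : List (PQTree U)) (fs : List (List U)) :
      List.Forall₂ IsFrontier cs fs →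
      IsFrontier (qnode cs) fs.flatten
  | qnodeRev (cs : List (PQTree U)) (fs : List (List U)) :
      List.Forall₂ IsFrontier cs.reverse fs →
      IsFrontier (qnode cs) fs.flatten

variable [DecidableEq U]

/-- `S` is compatible with the pq-tree `t`: some frontier order of `t` has a contiguous
segment whose elements are exactly `S` (in particular `S = ∅` is compatible). -/
def Compatible (S : Finset U) (t : PQTree U) : Prop :=
  ∃ l l₁ l₂ l₃ : List U, IsFrontier t l ∧ l = l₁ ++ l₂ ++ l₃ ∧ l₂.toFinset = S

/-- `S` is border-compatible with the pq-tree `t`: `S` is nonempty and in some frontier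
order of `t` the elements of `S` occupy a set of consecutive positions containing the
first or the last position, i.e. `S` is a prefix or a suffix of the frontier. -/
def BorderCompatible (S : Finset U) (t : PQTree U) : Prop :=
  S.Nonempty ∧ ∃ l l₁ l₂ : List U, IsFrontier t l ∧ l = l₁ ++ l₂ ∧
    (l₁.toFinset = S ∨ l₂.toFinset = S)

/-- `inner(v)`: the maximum of `Σ_{u∈S} w(u)` over all sets `S` compatible with the
subtree at `v` (including `S = ∅`, so `inner(v) ≥ 0`). -/
noncomputable def inner (w : U → ℤ) (t : PQTree U) : ℤ :=
  sSup {z : ℤ | ∃ S : Finset U, Compatible S t ∧ z = ∑ u ∈ S, w u}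

/-- `border(v)`: the maximum of `Σ_{u∈S} w(u)` over all (nonempty) sets `S`
border-compatible with the subtree at `v`. -/
noncomputable def border (w : U → ℤ) (t : PQTree U) : ℤ :=
  sSup {z : ℤ | ∃ S : Finset U, BorderCompatible S t ∧ z = ∑ u ∈ S, w u}

/-- A well-formed pq-tree: every internal node has a nonempty sequence of children
(so every subtree has at least one leaf). -/
inductive Proper : PQTree U → Prop where
  | leaf (u : U) : Proper (leaf u)
  | pnode (cs : List (PQTree U)) : cs ≠ [] → (∀ c ∈ cs, Proper c) → Proper (pnode cs)
  | qnode (cs : List (PQTree U)) : cs ≠ [] → (∀ c ∈ cs, Proper c) → Proper (qnode cs)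

end PQTree

/-!
A frontier of a q-node is the concatenation of frontiers of its children, taken in the given or
in the reversed order. Since the reverse of a frontier is again a frontier, border-compatible sets
are exactly the nonempty prefixes of frontiers. A nonempty prefix of a concatenation consists of
the complete frontiers of the first children followed by a nonempty prefix of a frontier of the
next child `c_i`, so its weight is at most `border(c_i)` plus the totals of the children before
`c_i`. This bound is attained: complete an optimal prefix for `c_i` by arbitrary frontiers of the
other children. The reversed order of the children yields the sums over the later children.
-/

section
variable {α β : Type*}

theorem List.Forall₂.imp_of_mem {R S : α → β → Prop} {l : List α} {u : List β}
    (H : ∀ a ∈ l, ∀ b, R a b → S a b) (h : List.Forall₂ R l u) : List.Forall₂ S l u :=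
  ((List.forall₂_and_left l u).2 ⟨H, h⟩).imp fun _ b hab => hab.1 b hab.2

theorem List.exists_forall₂_of_forall_exists {R : α → β → Prop} :
    ∀ {l : List α}, (∀ a ∈ l, ∃ b, R a b) → ∃ u, List.Forall₂ R l u
  | [], _ => ⟨[], .nil⟩
  | a :: l, h => by
    obtain ⟨b, hb⟩ := h a List.mem_cons_self
    obtain ⟨u, hu⟩ := exists_forall₂_of_forall_exists fun a ha => h a (List.mem_cons_of_mem _ ha)
    exact ⟨b :: u, .cons hb hu⟩

theorem List.Forall₂.perm_flatten {g : α → List β} {l : List α} {u : List (List β)}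
    (h : List.Forall₂ (fun a b => b.Perm (g a)) l u) : u.flatten.Perm (l.map g).flatten := by
  induction h with
  | nil => simp
  | cons hab _ ih => exact hab.append ih

theorem List.reverse_ofFn {n : ℕ} (c : Fin n → α) :
    (List.ofFn c).reverse = List.ofFn (c ∘ Fin.rev) :=
  List.ext_getElem (by simp) fun k _ _ => by simp [Fin.rev]; congr 2; omega

theorem sSup_setOf_exists_eq {ι : Type*} [SupSet α] (F : ι → α) :
    sSup {z | ∃ i, z = F i} = ⨆ i, F i := by
  simp only [iSup, Set.range, eq_comm]

end

namespace PQTree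

section
variable {U : Type}

theorem induction_on_children {motive : PQTree U → Prop} (leaf : ∀ u, motive (leaf u))
    (pnode : ∀ cs, (∀ c ∈ cs, motive c) → motive (pnode cs))
    (qnode : ∀ cs, (∀ c ∈ cs, motive c) → motive (qnode cs)) : ∀ t, motive t
  | .leaf u => leaf u
  | .pnode cs => pnode cs fun c _ => induction_on_children leaf pnode qnode c
  | .qnode cs => qnode cs fun c _ => induction_on_children leaf pnode qnode c

theorem leaves_pnode (cs : List (PQTree U)) : leaves (pnode cs) = (cs.map leaves).flatten := by
  simp [leaves, List.flatMap]

theorem leaves_qnode (cs : List (PQTree U)) : leaves (qnode cs) = (cs.map leaves).flatten := by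
  simp [leaves, List.flatMap]

theorem IsFrontier.perm_leaves {t : PQTree U} {l : List U} (h : IsFrontier t l) :
    l.Perm (leaves t) := by
  induction t using induction_on_children generalizing l with
  | leaf u => cases h; simp [leaves]
  | pnode cs ih =>
    cases h with | pnode _ cs' fs hperm hfs =>
    rw [leaves_pnode]
    exact (hfs.imp_of_mem fun c hc _ => ih c (hperm.subset hc)).perm_flatten.trans
      (hperm.map leaves).flatten
  | qnode cs ih =>
    rw [leaves_qnode]
    cases h with
    | qnodeKeep _ fs hfs => exact (hfs.imp_of_mem fun c hc _ => ih c hc).perm_flatten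
    | qnodeRev _ fs hfs =>
      exact (hfs.imp_of_mem fun c hc _ => ih c (List.mem_reverse.1 hc)).perm_flatten.trans
        (cs.reverse_perm.map leaves).flatten

theorem IsFrontier.reverse {t : PQTree U} {l : List U} (h : IsFrontier t l) :
    IsFrontier t l.reverse := by
  induction t using induction_on_children generalizing l with
  | leaf u => cases h; exact .leaf u
  | pnode cs ih =>
    cases h with | pnode _ cs' fs hperm hfs =>
    rw [List.reverse_flatten]
    refine .pnode cs cs'.reverse _ (cs'.reverse_perm.trans hperm) ?_
    rw [List.forall₂_reverse_iff, List.forall₂_map_right_iff]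
    exact hfs.imp_of_mem fun c hc _ => ih c (hperm.subset hc)
  | qnode cs ih =>
    cases h with
    | qnodeKeep _ fs hfs =>
      rw [List.reverse_flatten]
      refine .qnodeRev cs _ ?_
      rw [List.forall₂_reverse_iff, List.forall₂_map_right_iff]
      exact hfs.imp_of_mem fun c hc _ => ih c hc
    | qnodeRev _ fs hfs =>
      rw [List.reverse_flatten]
      refine .qnodeKeep cs _ ?_
      rw [← List.forall₂_reverse_iff, List.reverse_reverse, List.forall₂_map_right_iff]
      exact hfs.imp_of_mem fun c hc _ => ih c (List.mem_reverse.1 hc)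

theorem exists_isFrontier {t : PQTree U} (ht : Proper t) : ∃ l, IsFrontier t l := by
  induction t using induction_on_children with
  | leaf u => exact ⟨[u], .leaf u⟩
  | pnode cs ih =>
    obtain _ | ⟨_, -, hcs⟩ | ⟨_, -, hcs⟩ := ht
    obtain ⟨fs, hfs⟩ := List.exists_forall₂_of_forall_exists fun c hc => ih c hc (hcs c hc)
    exact ⟨_, .pnode cs cs fs (List.Perm.refl cs) hfs⟩
  | qnode cs ih =>
    obtain _ | ⟨_, -, hcs⟩ | ⟨_, -, hcs⟩ := ht
    obtain ⟨fs, hfs⟩ := List.exists_forall₂_of_forall_exists fun c hc => ih c hc (hcs c hc)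
    exact ⟨_, .qnodeKeep cs fs hfs⟩

theorem leaves_ne_nil {t : PQTree U} (ht : Proper t) : leaves t ≠ [] := by
  induction t using induction_on_children with
  | leaf u => simp [leaves]
  | pnode cs ih | qnode cs ih =>
    obtain _ | ⟨_, hne, hcs⟩ | ⟨_, hne, hcs⟩ := ht
    obtain ⟨c, hc⟩ := List.exists_mem_of_ne_nil cs hne
    simp only [leaves_pnode, leaves_qnode, ne_eq, List.flatten_eq_nil_iff, List.mem_map]
    exact fun h => ih c hc (hcs c hc) (h _ ⟨c, hc, rfl⟩)

theorem IsFrontier.ne_nil {t : PQTree U} {l : List U} (h : IsFrontier t l) (ht : Proper t) :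
    l ≠ [] := fun hl => leaves_ne_nil ht (hl ▸ h.perm_leaves).nil_eq.symm

theorem IsFrontier.sum_map {t : PQTree U} {l : List U} (h : IsFrontier t l) (w : U → ℤ) :
    (l.map w).sum = total w t :=
  (h.perm_leaves.map w).sum_eq

theorem IsFrontier.nodup {t : PQTree U} {l : List U} (h : IsFrontier t l)
    (hnd : (leaves t).Nodup) : l.Nodup :=
  h.perm_leaves.nodup_iff.2 hnd

theorem isFrontier_qnode_iff {cs : List (PQTree U)} {l : List U} :
    IsFrontier (qnode cs) l ↔ ∃ fs, (List.Forall₂ IsFrontier cs fs ∨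
      List.Forall₂ IsFrontier cs.reverse fs) ∧ l = fs.flatten := by
  constructor
  · rintro (_ | _ | ⟨_, fs, hfs⟩ | ⟨_, fs, hfs⟩)
    exacts [⟨fs, .inl hfs, rfl⟩, ⟨fs, .inr hfs, rfl⟩]
  · rintro ⟨fs, hfs | hfs, rfl⟩
    exacts [.qnodeKeep cs fs hfs, .qnodeRev cs fs hfs]

theorem proper_of_mem_qnode {cs : List (PQTree U)} {c : PQTree U} (h : Proper (qnode cs))
    (hc : c ∈ cs) : Proper c := by
  cases h with | qnode _ _ hcs => exact hcs c hc

theorem nodup_leaves_of_mem_qnode {cs : List (PQTree U)} {c : PQTree U}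
    (h : (leaves (qnode cs)).Nodup) (hc : c ∈ cs) : (leaves c).Nodup := by
  rw [leaves_qnode, List.nodup_flatten] at h
  exact h.1 _ (List.mem_map_of_mem hc)

end

section
variable {U : Type} [DecidableEq U]

theorem borderCompatible_iff {S : Finset U} {t : PQTree U} :
    BorderCompatible S t ↔ ∃ p q, IsFrontier t (p ++ q) ∧ p ≠ [] ∧ p.toFinset = S := by
  constructor
  · rintro ⟨hS, l, l₁, l₂, hl, rfl, rfl | rfl⟩
    · exact ⟨l₁, l₂, hl, by simpa using hS, rfl⟩
    · refine ⟨l₂.reverse, l₁.reverse, by simpa using hl.reverse, by simpa using hS, by simp⟩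
  · rintro ⟨p, q, hl, hp, rfl⟩
    exact ⟨by simpa using hp, _, p, q, hl, rfl, Or.inl rfl⟩

theorem finite_setOf_borderCompatible (w : U → ℤ) (t : PQTree U) :
    {z : ℤ | ∃ S, BorderCompatible S t ∧ z = ∑ u ∈ S, w u}.Finite := by
  refine ((leaves t).toFinset.powerset.finite_toSet.image fun S => ∑ u ∈ S, w u).subset ?_
  rintro z ⟨S, hS, rfl⟩
  obtain ⟨p, q, hl, -, rfl⟩ := borderCompatible_iff.1 hS
  refine ⟨p.toFinset, ?_, rfl⟩
  simpa [List.subset_def] using fun u hu => hl.perm_leaves.subset (List.mem_append_left q hu)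

theorem le_border_of_prefix (w : U → ℤ) {t : PQTree U} {p q : List U}
    (hnd : (leaves t).Nodup) (h : IsFrontier t (p ++ q)) (hp : p ≠ []) :
    (p.map w).sum ≤ border w t :=
  le_csSup (finite_setOf_borderCompatible w t).bddAbove
    ⟨p.toFinset, borderCompatible_iff.2 ⟨p, q, h, hp, rfl⟩,
      (List.sum_toFinset w (h.nodup hnd).of_append_left).symm⟩

theorem exists_prefix_sum_eq_border (w : U → ℤ) {t : PQTree U} (ht : Proper t)
    (hnd : (leaves t).Nodup) :
    ∃ p q, IsFrontier t (p ++ q) ∧ p ≠ [] ∧ (p.map w).sum = border w t := by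
  obtain ⟨l, hl⟩ := exists_isFrontier ht
  have hne : {z : ℤ | ∃ S, BorderCompatible S t ∧ z = ∑ u ∈ S, w u}.Nonempty :=
    ⟨_, l.toFinset, borderCompatible_iff.2 ⟨l, [], by simpa using hl, hl.ne_nil ht, rfl⟩, rfl⟩
  obtain ⟨S, hS, hsum⟩ := hne.csSup_mem (finite_setOf_borderCompatible w t)
  obtain ⟨p, q, hpq, hp, rfl⟩ := borderCompatible_iff.1 hS
  exact ⟨p, q, hpq, hp, by rw [border, hsum, List.sum_toFinset w (hpq.nodup hnd).of_append_left]⟩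

theorem border_le_of_prefix (w : U → ℤ) {t : PQTree U} {b : ℤ} (ht : Proper t)
    (hnd : (leaves t).Nodup)
    (hb : ∀ p q, IsFrontier t (p ++ q) → p ≠ [] → (p.map w).sum ≤ b) : border w t ≤ b := by
  obtain ⟨p, q, h, hp, hsum⟩ := exists_prefix_sum_eq_border w ht hnd
  exact hsum ▸ hb p q h hp

variable {n : ℕ}

noncomputable def prefixBorder (w : U → ℤ) (c : Fin n → PQTree U) (i : Fin n) : ℤ :=
  border w (c i) + ∑ j ∈ Finset.univ.filter (fun j : Fin n => j < i), total w (c j)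

noncomputable def suffixBorder (w : U → ℤ) (c : Fin n → PQTree U) (i : Fin n) : ℤ :=
  border w (c i) + ∑ j ∈ Finset.univ.filter (fun j : Fin n => i < j), total w (c j)

theorem prefixBorder_zero (w : U → ℤ) (c : Fin (n + 1) → PQTree U) :
    prefixBorder w c 0 = border w (c 0) := by
  simp [prefixBorder]

theorem prefixBorder_succ (w : U → ℤ) (c : Fin (n + 1) → PQTree U) (i : Fin n) :
    prefixBorder w c i.succ = total w (c 0) + prefixBorder w (fun j => c j.succ) i := by
  simp only [prefixBorder, Finset.sum_filter, Fin.sum_univ_succ, Fin.succ_pos, if_true,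
    Fin.succ_lt_succ_iff]
  ring

theorem prefixBorder_comp_rev (w : U → ℤ) (c : Fin n → PQTree U) (i : Fin n) :
    prefixBorder w (c ∘ Fin.rev) i = suffixBorder w c i.rev := by
  simp only [prefixBorder, suffixBorder, Function.comp_apply]
  congr 1
  exact Finset.sum_nbij' Fin.rev Fin.rev (by simp [Fin.lt_rev_iff]) (by simp [Fin.rev_lt_iff])
    (by simp) (by simp) (by simp)

theorem exists_sum_prefix_le_prefixBorder (w : U → ℤ) :
    ∀ {n : ℕ} {c : Fin n → PQTree U} {fs : List (List U)} {p q : List U},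
      (∀ i, (leaves (c i)).Nodup) → List.Forall₂ IsFrontier (List.ofFn c) fs →
      fs.flatten = p ++ q → p ≠ [] → ∃ i, (p.map w).sum ≤ prefixBorder w c i
  | 0, _, _, _, _, _, hfs, hpq, hp => by
    rw [List.ofFn_zero, List.forall₂_nil_left_iff] at hfs
    subst hfs
    exact absurd (List.append_eq_nil_iff.1 hpq.symm).1 hp
  | n + 1, c, _, p, q, hnd, hfs, hpq, hp => by
    rw [List.ofFn_succ] at hfs
    obtain ⟨f, fs, hf, hrest, rfl⟩ := List.forall₂_cons_left_iff.1 hfs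
    have head_le : ∀ r, f = p ++ r → ∃ i, (p.map w).sum ≤ prefixBorder w c i := fun r hr =>
      ⟨0, prefixBorder_zero w c ▸ le_border_of_prefix w (hnd 0) (hr ▸ hf) hp⟩
    rw [List.flatten_cons, List.append_eq_append_iff] at hpq
    obtain ⟨p', rfl, hp'q⟩ | ⟨r, rfl, -⟩ := hpq
    · obtain rfl | hp' := eq_or_ne p' []
      · exact head_le [] (by simp)
      obtain ⟨i, hi⟩ := exists_sum_prefix_le_prefixBorder w (fun i => hnd i.succ) hrest hp'q hp'
      refine ⟨i.succ, ?_⟩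
      rw [prefixBorder_succ, List.map_append, List.sum_append, hf.sum_map]
      exact Int.add_le_add_left hi _
    · exact head_le r rfl

theorem exists_prefix_sum_eq_prefixBorder (w : U → ℤ) :
    ∀ {n : ℕ} {c : Fin n → PQTree U}, (∀ i, Proper (c i)) → (∀ i, (leaves (c i)).Nodup) →
      ∀ i, ∃ fs p q, List.Forall₂ IsFrontier (List.ofFn c) fs ∧ fs.flatten = p ++ q ∧
        p ≠ [] ∧ (p.map w).sum = prefixBorder w c i
  | 0, _, _, _, i => i.elim0
  | n + 1, c, hc, hnd, i => by
    simp only [List.ofFn_succ, List.forall₂_cons_left_iff]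
    obtain ⟨f, hf⟩ := exists_isFrontier (hc 0)
    obtain ⟨gs, hgs⟩ := List.exists_forall₂_of_forall_exists
      (List.forall_mem_ofFn_iff.2 fun j => exists_isFrontier (hc j.succ))
    cases i using Fin.cases with
    | zero =>
      obtain ⟨p, q, hpq, hp, hsum⟩ := exists_prefix_sum_eq_border w (hc 0) (hnd 0)
      exact ⟨(p ++ q) :: gs, p, q ++ gs.flatten, ⟨_, _, hpq, hgs, rfl⟩, by simp, hp,
        by rw [hsum, prefixBorder_zero]⟩
    | succ i =>
      obtain ⟨fs, p, q, hfs, hpq, hp, hsum⟩ :=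
        exists_prefix_sum_eq_prefixBorder w (fun j => hc j.succ) (fun j => hnd j.succ) i
      exact ⟨f :: fs, f ++ p, q, ⟨_, _, hf, hfs, rfl⟩, by simp [hpq], by simp [hp],
        by rw [prefixBorder_succ, List.map_append, List.sum_append, hf.sum_map, hsum]⟩

theorem border_qnode_le (w : U → ℤ) {c : Fin n → PQTree U} {b : ℤ}
    (hp : Proper (qnode (List.ofFn c))) (hnd : (leaves (qnode (List.ofFn c))).Nodup)
    (hpre : ∀ i, prefixBorder w c i ≤ b) (hsuf : ∀ i, suffixBorder w c i ≤ b) :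
    border w (qnode (List.ofFn c)) ≤ b := by
  have hndc i : (leaves (c i)).Nodup := nodup_leaves_of_mem_qnode hnd (List.mem_ofFn.2 ⟨i, rfl⟩)
  refine border_le_of_prefix w hp hnd fun p q hpq hne => ?_
  obtain ⟨fs, hfs | hfs, hflat⟩ := isFrontier_qnode_iff.1 hpq
  · obtain ⟨i, hi⟩ := exists_sum_prefix_le_prefixBorder w hndc hfs hflat.symm hne
    exact hi.trans (hpre i)
  · rw [List.reverse_ofFn] at hfs
    obtain ⟨i, hi⟩ := exists_sum_prefix_le_prefixBorder w (fun i => hndc i.rev) hfs hflat.symm hne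
    exact hi.trans (prefixBorder_comp_rev w c i ▸ hsuf i.rev)

theorem prefixBorder_le_border (w : U → ℤ) {c : Fin n → PQTree U} {t : PQTree U}
    (ht : ∀ fs, List.Forall₂ IsFrontier (List.ofFn c) fs → IsFrontier t fs.flatten)
    (hc : ∀ i, Proper (c i)) (hndc : ∀ i, (leaves (c i)).Nodup) (hnd : (leaves t).Nodup)
    (i : Fin n) : prefixBorder w c i ≤ border w t := by
  obtain ⟨fs, p, q, hfs, hpq, hp, hsum⟩ := exists_prefix_sum_eq_prefixBorder w hc hndc i
  exact hsum ▸ le_border_of_prefix w hnd (hpq ▸ ht fs hfs) hp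

end

/-- **Lemma: `border` at a q-node.** For a q-node `v` with children
`c_1, …, c_ℓ` (`ℓ ≥ 2`) in their given order,
`border(v) = max(x, y)` where `x = max_i (border(c_i) + Σ_{j<i} total(c_j))` and
`y = max_i (border(c_i) + Σ_{j>i} total(c_j))`. -/
theorem border_qnode {U : Type} [DecidableEq U] (w : U → ℤ) (ℓ : ℕ) (hℓ : 2 ≤ ℓ)
    (c : Fin ℓ → PQTree U) (hp : Proper (qnode (List.ofFn c)))
    (hnd : (leaves (qnode (List.ofFn c))).Nodup) :
    border w (qnode (List.ofFn c)) =
      max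
        (sSup {z : ℤ | ∃ i : Fin ℓ, z = border w (c i) +
          ∑ j ∈ Finset.univ.filter (fun j : Fin ℓ => j < i), total w (c j)})
        (sSup {z : ℤ | ∃ i : Fin ℓ, z = border w (c i) +
          ∑ j ∈ Finset.univ.filter (fun j : Fin ℓ => i < j), total w (c j)}) := by
  have : NeZero ℓ := ⟨by omega⟩
  have hc i : Proper (c i) := proper_of_mem_qnode hp (List.mem_ofFn.2 ⟨i, rfl⟩)
  have hndc i : (leaves (c i)).Nodup := nodup_leaves_of_mem_qnode hnd (List.mem_ofFn.2 ⟨i, rfl⟩)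
  have keep fs (h : List.Forall₂ IsFrontier (List.ofFn c) fs) :
      IsFrontier (qnode (List.ofFn c)) fs.flatten := .qnodeKeep _ _ h
  have rev fs (h : List.Forall₂ IsFrontier (List.ofFn (c ∘ Fin.rev)) fs) :
      IsFrontier (qnode (List.ofFn c)) fs.flatten := .qnodeRev _ _ (List.reverse_ofFn c ▸ h)
  rw [sSup_setOf_exists_eq, sSup_setOf_exists_eq]
  apply le_antisymm
  · exact border_qnode_le w hp hnd
      (fun i => le_max_of_le_left (le_ciSup (Set.finite_range _).bddAbove i))
      (fun i => le_max_of_le_right (le_ciSup (Set.finite_range _).bddAbove i))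
  · refine max_le (ciSup_le (prefixBorder_le_border w keep hc hndc hnd)) (ciSup_le fun i => ?_)
    have h := prefixBorder_le_border w rev (fun i => hc i.rev) (fun i => hndc i.rev) hnd i.rev
    rwa [prefixBorder_comp_rev, Fin.rev_rev] at h

end PQTree
end
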